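/- For every n-vertex graph G, the average matching size satisfies avm(G) ≤ avm(K_n), with equality if and only if G is the complete graph K_n. -/

import Mathlib

open Finset Polynomial

set_option linter.unusedSectionVars false
set_option linter.unusedVariables false
set_option maxHeartbeats 1000000

namespace AvgMatching

variable {V : Type*} [Fintype V] [DecidableEq V]

/-- A matching of `G`, viewed as a finite set of edges of `G`
no two of which share a vertex. -/
def IsMatchingSet (G : SimpleGraph V) (A : Finset (Sym2 V)) : Prop :=
  ↑A ⊆ G.edgeSet ∧ (A : Set (Sym2 V)).Pairwise fun e f => ∀ v : V, v ∈ e → v ∉ f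

open Classical in
/-- The finite set of all matchings of `G` (including the empty matching). -/
noncomputable def matchings (G : SimpleGraph V) : Finset (Finset (Sym2 V)) :=
  Finset.univ.filter (IsMatchingSet G)

/-- `M(G)`: the number of matchings of `G` (including the empty one). -/
noncomputable def numM (G : SimpleGraph V) : ℕ := (matchings G).card

/-- `S(G)`: the sum of the sizes of all matchings of `G`. -/
noncomputable def totS (G : SimpleGraph V) : ℕ := ∑ A ∈ matchings G, A.card

/-- `avm(G) = S(G)/M(G)`: the average size of a matching of `G`. -/
noncomputable def avm (G : SimpleGraph V) : ℚ := (totS G : ℚ) / (numM G)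

/-- `m(G,k)`: the number of matchings of size `k` in `G`. -/
noncomputable def mCount (G : SimpleGraph V) (k : ℕ) : ℕ :=
  ((matchings G).filter fun A => A.card = k).card

/-- `μ(G)`: the matching number of `G`. -/
noncomputable def matchNum (G : SimpleGraph V) : ℕ := (matchings G).sup Finset.card

/-- Delete a vertex `u` (keeping it as an isolated vertex, which does not
affect matchings): all edges incident to `u` are removed. -/
def delVert (G : SimpleGraph V) (u : V) : SimpleGraph V :=
  G.deleteEdges {e : Sym2 V | u ∈ e}

/-! ### Auxiliary definitions -/

variable {G : SimpleGraph V}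

noncomputable def fib (G : SimpleGraph V) (k : ℕ) : Finset (Finset (Sym2 V)) :=
  (matchings G).filter fun A => A.card = k

open Classical in
noncomputable def cov (A : Finset (Sym2 V)) : Finset V :=
  Finset.univ.filter fun v => ∃ e ∈ A, v ∈ e

noncomputable def uncov (B : Finset (Sym2 V)) : Finset V := Finset.univ \ cov B

open Classical in
noncomputable def XS (G : SimpleGraph V) (k : ℕ) : Finset (Σ _ : Finset (Sym2 V), V × V) :=
  (fib G (k+1)).sigma fun A => (Finset.univ.offDiag).filter fun p : V × V => s(p.1, p.2) ∈ A

open Classical in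
noncomputable def YS (G : SimpleGraph V) (k : ℕ) : Finset (Σ _ : Finset (Sym2 V), V × V) :=
  (fib G k).sigma fun B => (Finset.univ.offDiag).filter fun p : V × V =>
    s(p.1, p.2) ∈ G.edgeSet ∧ p.1 ∉ cov B ∧ p.2 ∉ cov B

open Classical in
noncomputable def edgeF (G : SimpleGraph V) : Finset (Sym2 V) :=
  Finset.univ.filter fun e => e ∈ G.edgeSet

/-! ### Basic lemmas -/

lemma mem_matchings {A : Finset (Sym2 V)} : A ∈ matchings G ↔ IsMatchingSet G A := by
  simp [matchings]

lemma isMatchingSet_empty : IsMatchingSet G (∅ : Finset (Sym2 V)) := by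
  constructor
  · simp
  · simp

lemma IsMatchingSet.subset {A B : Finset (Sym2 V)} (h : IsMatchingSet G A) (hBA : B ⊆ A) :
    IsMatchingSet G B :=
  ⟨fun e he => h.1 (hBA he), h.2.mono (Finset.coe_subset.2 hBA)⟩

lemma numM_pos : 0 < numM G :=
  Finset.card_pos.2 ⟨∅, mem_matchings.2 isMatchingSet_empty⟩

lemma mem_fib {A : Finset (Sym2 V)} {k : ℕ} :
    A ∈ fib G k ↔ IsMatchingSet G A ∧ A.card = k := by
  simp [fib, mem_matchings]

lemma mCount_eq_fib (G : SimpleGraph V) (k : ℕ) : mCount G k = (fib G k).card := rfl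

lemma not_isDiag_of_mem_matching {A : Finset (Sym2 V)} {e : Sym2 V}
    (h : IsMatchingSet G A) (he : e ∈ A) : ¬e.IsDiag :=
  G.not_isDiag_of_mem_edgeSet (h.1 he)

lemma mem_cov {A : Finset (Sym2 V)} {v : V} : v ∈ cov A ↔ ∃ e ∈ A, v ∈ e := by
  simp [cov]

lemma mem_edgeF {e : Sym2 V} : e ∈ edgeF G ↔ e ∈ G.edgeSet := by simp [edgeF]

/-! ### Counting covered vertices and incident ordered pairs -/

lemma card_filter_mem_sym2 {e : Sym2 V} (he : ¬ e.IsDiag) :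
    (Finset.univ.filter (fun v => v ∈ e)).card = 2 := by
  induction e using Sym2.inductionOn with
  | _ x y =>
    rw [Sym2.mk_isDiag_iff] at he
    have h1 : (Finset.univ.filter (fun v => v ∈ s(x, y))) = {x, y} := by
      ext v; simp [Sym2.mem_iff]
    rw [h1, Finset.card_insert_of_notMem (by simp [he]), Finset.card_singleton]

lemma card_cov {A : Finset (Sym2 V)} (h : IsMatchingSet G A) : (cov A).card = 2 * A.card := by
  classical
  have hrw : cov A = A.biUnion fun e => Finset.univ.filter (fun v => v ∈ e) := by
    ext v; simp [mem_cov]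
  rw [hrw, Finset.card_biUnion]
  · rw [Finset.sum_congr rfl (fun e he => card_filter_mem_sym2 (not_isDiag_of_mem_matching h he)),
      Finset.sum_const, smul_eq_mul, mul_comm]
  · intro e he f hf hef
    rw [Function.onFun, Finset.disjoint_left]
    intro v hv hv'
    simp only [Finset.mem_filter, Finset.mem_univ, true_and] at hv hv'
    exact h.2 (Finset.mem_coe.2 he) (Finset.mem_coe.2 hf) hef v hv hv'

lemma card_uncov {B : Finset (Sym2 V)} (h : IsMatchingSet G B) :
    (uncov B).card = Fintype.card V - 2 * B.card := by
  rw [uncov, Finset.card_sdiff_of_subset (Finset.subset_univ _), card_cov h, Finset.card_univ]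

lemma card_pair_fiber {e : Sym2 V} (he : ¬ e.IsDiag) :
    ((Finset.univ.offDiag).filter fun p : V × V => s(p.1, p.2) = e).card = 2 := by
  induction e using Sym2.inductionOn with
  | _ x y =>
    rw [Sym2.mk_isDiag_iff] at he
    have h1 : ((Finset.univ.offDiag).filter fun p : V × V => s(p.1, p.2) = s(x, y))
        = {(x, y), (y, x)} := by
      ext ⟨a, b⟩
      simp only [Finset.mem_filter, Finset.mem_offDiag, Finset.mem_univ, true_and,
        Sym2.eq_iff, Finset.mem_insert, Finset.mem_singleton, Prod.mk.injEq]
      constructor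
      · rintro ⟨hab, (⟨rfl, rfl⟩ | ⟨rfl, rfl⟩)⟩
        · exact Or.inl ⟨rfl, rfl⟩
        · exact Or.inr ⟨rfl, rfl⟩
      · rintro (⟨rfl, rfl⟩ | ⟨rfl, rfl⟩)
        · exact ⟨he, Or.inl ⟨rfl, rfl⟩⟩
        · exact ⟨Ne.symm he, Or.inr ⟨rfl, rfl⟩⟩
    rw [h1, Finset.card_insert_of_notMem (by simp [Prod.ext_iff]; exact fun h => (he h).elim),
      Finset.card_singleton]

lemma card_pairs_of_nondiag {A : Finset (Sym2 V)} (hA : ∀ e ∈ A, ¬ e.IsDiag) :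
    ((Finset.univ.offDiag).filter fun p : V × V => s(p.1, p.2) ∈ A).card = 2 * A.card := by
  classical
  rw [Finset.card_eq_sum_card_fiberwise (f := fun p : V × V => s(p.1, p.2)) (t := A)
      (s := (Finset.univ.offDiag).filter fun p : V × V => s(p.1, p.2) ∈ A)
      (fun p hp => (Finset.mem_filter.1 hp).2)]
  rw [Finset.sum_congr rfl (fun e he => ?_), Finset.sum_const, smul_eq_mul, mul_comm]
  have h1 : (((Finset.univ.offDiag).filter fun p : V × V => s(p.1, p.2) ∈ A).filter
        fun p : V × V => s(p.1, p.2) = e)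
      = (Finset.univ.offDiag).filter fun p : V × V => s(p.1, p.2) = e := by
    rw [Finset.filter_filter]
    apply Finset.filter_congr
    intro p hp
    constructor
    · exact fun h => h.2
    · exact fun h => ⟨h ▸ he, h⟩
  rw [h1]
  exact card_pair_fiber (hA e he)

/-! ### The two sides of the double count -/

lemma card_XS (G : SimpleGraph V) (k : ℕ) :
    (XS G k).card = (2 * (k+1)) * mCount G (k+1) := by
  classical
  rw [XS, Finset.card_sigma]
  rw [Finset.sum_congr rfl (fun A hA => ?_), Finset.sum_const, smul_eq_mul, mul_comm,
    mCount_eq_fib]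
  obtain ⟨hm, hc⟩ := mem_fib.1 hA
  rw [card_pairs_of_nondiag (fun e he => not_isDiag_of_mem_matching hm he), hc]

lemma card_XS_le_card_YS (G : SimpleGraph V) (k : ℕ) : (XS G k).card ≤ (YS G k).card := by
  classical
  apply Finset.card_le_card_of_injOn
    (fun x => ⟨x.1.erase s(x.2.1, x.2.2), x.2⟩)
  · rintro ⟨A, p⟩ hx
    simp only [XS, Finset.mem_coe, Finset.mem_sigma, Finset.mem_filter] at hx
    obtain ⟨hA, hp, heA⟩ := hx
    obtain ⟨hm, hc⟩ := mem_fib.1 hA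
    simp only [YS, Finset.mem_coe, Finset.mem_sigma, Finset.mem_filter]
    have huncov : ∀ v ∈ s(p.1, p.2), v ∉ cov (A.erase s(p.1, p.2)) := by
      intro v hv hvc
      obtain ⟨f, hf, hvf⟩ := mem_cov.1 hvc
      have hfA : f ∈ A := Finset.mem_of_mem_erase hf
      have hfe : f ≠ s(p.1, p.2) := Finset.ne_of_mem_erase hf
      exact hm.2 (Finset.mem_coe.2 heA) (Finset.mem_coe.2 hfA) (Ne.symm hfe) v hv hvf
    refine ⟨mem_fib.2 ⟨hm.subset (Finset.erase_subset _ _), ?_⟩, hp,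
      hm.1 heA, ?_, ?_⟩
    · rw [Finset.card_erase_of_mem heA, hc]; omega
    · exact huncov p.1 (Sym2.mem_mk_left _ _)
    · exact huncov p.2 (Sym2.mem_mk_right _ _)
  · rintro ⟨A, p⟩ hA ⟨A', p'⟩ hA' heq
    simp only [Sigma.mk.inj_iff, heq_eq_eq] at heq
    obtain ⟨hB, rfl⟩ := heq
    simp only [XS, Finset.mem_coe, Finset.mem_sigma, Finset.mem_filter] at hA hA'
    have h1 : A = insert s(p.1, p.2) (A.erase s(p.1, p.2)) := (Finset.insert_erase hA.2.2).symm
    have h2 : A' = insert s(p.1, p.2) (A'.erase s(p.1, p.2)) := (Finset.insert_erase hA'.2.2).symm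
    rw [Sigma.mk.inj_iff, heq_eq_eq]
    exact ⟨by rw [h1, h2, hB], rfl⟩

lemma card_YS_top_le_card_XS (k : ℕ) :
    (YS (⊤ : SimpleGraph V) k).card ≤ (XS (⊤ : SimpleGraph V) k).card := by
  classical
  apply Finset.card_le_card_of_injOn
    (fun y => ⟨insert s(y.2.1, y.2.2) y.1, y.2⟩)
  · rintro ⟨B, p⟩ hy
    simp only [YS, Finset.mem_coe, Finset.mem_sigma, Finset.mem_filter] at hy
    obtain ⟨hB, hp, heE, h1, h2⟩ := hy
    obtain ⟨hm, hc⟩ := mem_fib.1 hB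
    have heB : s(p.1, p.2) ∉ B := fun hmem =>
      h1 (mem_cov.2 ⟨s(p.1, p.2), hmem, Sym2.mem_mk_left _ _⟩)
    have hcompat : ∀ f ∈ (B : Set (Sym2 V)), (∀ v ∈ s(p.1, p.2), v ∉ f) ∧
        (∀ v ∈ f, v ∉ s(p.1, p.2)) := by
      intro f hf
      constructor
      · intro v hv hvf
        rcases Sym2.mem_iff.1 hv with rfl | rfl
        · exact h1 (mem_cov.2 ⟨f, hf, hvf⟩)
        · exact h2 (mem_cov.2 ⟨f, hf, hvf⟩)
      · intro v hvf hv
        rcases Sym2.mem_iff.1 hv with rfl | rfl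
        · exact h1 (mem_cov.2 ⟨f, hf, hvf⟩)
        · exact h2 (mem_cov.2 ⟨f, hf, hvf⟩)
    simp only [XS, Finset.mem_coe, Finset.mem_sigma, Finset.mem_filter]
    refine ⟨mem_fib.2 ⟨⟨?_, ?_⟩, ?_⟩, hp, Finset.mem_insert_self _ _⟩
    · rw [Finset.coe_insert]
      exact Set.insert_subset heE hm.1
    · rw [Finset.coe_insert]
      rw [Set.pairwise_insert]
      exact ⟨hm.2, fun f hf _ => (hcompat f hf)⟩
    · rw [Finset.card_insert_of_notMem heB, hc]
  · rintro ⟨B, p⟩ hB ⟨B', p'⟩ hB' heq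
    simp only [Sigma.mk.inj_iff, heq_eq_eq] at heq
    obtain ⟨hI, rfl⟩ := heq
    simp only [YS, Finset.mem_coe, Finset.mem_sigma, Finset.mem_filter] at hB hB'
    have e1 : s(p.1, p.2) ∉ B := fun hmem =>
      hB.2.2.2.1 (mem_cov.2 ⟨s(p.1, p.2), hmem, Sym2.mem_mk_left _ _⟩)
    have e2 : s(p.1, p.2) ∉ B' := fun hmem =>
      hB'.2.2.2.1 (mem_cov.2 ⟨s(p.1, p.2), hmem, Sym2.mem_mk_left _ _⟩)
    rw [Sigma.mk.inj_iff, heq_eq_eq]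
    refine ⟨?_, rfl⟩
    have := congrArg (fun s => Finset.erase s s(p.1, p.2)) hI
    simpa [Finset.erase_insert e1, Finset.erase_insert e2] using this

lemma card_YS_le (G : SimpleGraph V) (k : ℕ) :
    (YS G k).card ≤ ((Fintype.card V - 2*k) * (Fintype.card V - 2*k) - (Fintype.card V - 2*k))
      * mCount G k := by
  classical
  rw [YS, Finset.card_sigma, mCount_eq_fib]
  rw [mul_comm]
  rw [← smul_eq_mul, ← Finset.sum_const]
  apply Finset.sum_le_sum
  intro B hB
  obtain ⟨hm, hc⟩ := mem_fib.1 hB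
  have hsub : ((Finset.univ.offDiag).filter fun p : V × V =>
      s(p.1, p.2) ∈ G.edgeSet ∧ p.1 ∉ cov B ∧ p.2 ∉ cov B) ⊆ (uncov B).offDiag := by
    intro p hp
    simp only [Finset.mem_filter, Finset.mem_offDiag, Finset.mem_univ, true_and] at hp
    simp only [Finset.mem_offDiag, uncov, Finset.mem_sdiff, Finset.mem_univ, true_and]
    exact ⟨hp.2.2.1, hp.2.2.2, hp.1⟩
  calc _ ≤ ((uncov B).offDiag).card := Finset.card_le_card hsub
    _ = _ := by rw [Finset.offDiag_card, card_uncov hm, hc]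

lemma card_YS_top (k : ℕ) :
    (YS (⊤ : SimpleGraph V) k).card =
      ((Fintype.card V - 2*k) * (Fintype.card V - 2*k) - (Fintype.card V - 2*k))
      * mCount (⊤ : SimpleGraph V) k := by
  classical
  rw [YS, Finset.card_sigma, mCount_eq_fib, mul_comm, ← smul_eq_mul, ← Finset.sum_const]
  refine Finset.sum_congr rfl fun B hB => ?_
  obtain ⟨hm, hc⟩ := mem_fib.1 hB
  have h2 : ((uncov B).offDiag).card =
      (Fintype.card V - 2*k) * (Fintype.card V - 2*k) - (Fintype.card V - 2*k) := by
    rw [Finset.offDiag_card, card_uncov hm, hc]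
  rw [← h2]
  refine le_antisymm (Finset.card_le_card fun p hp => ?_) (Finset.card_le_card fun p hp => ?_)
  · simp only [Finset.mem_filter, Finset.mem_offDiag, Finset.mem_univ, true_and,
      uncov, Finset.mem_sdiff] at hp ⊢
    tauto
  · simp only [Finset.mem_offDiag, uncov, Finset.mem_sdiff, Finset.mem_univ, true_and] at hp
    simp only [Finset.mem_filter, Finset.mem_offDiag, Finset.mem_univ, true_and,
      SimpleGraph.mem_edgeSet, SimpleGraph.top_adj]
    tauto

/-! ### The key local inequality and equality -/

lemma key_le (G : SimpleGraph V) (k : ℕ) :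
    (2 * (k+1)) * mCount G (k+1) ≤
    ((Fintype.card V - 2*k) * (Fintype.card V - 2*k) - (Fintype.card V - 2*k))
      * mCount G k := by
  rw [← card_XS]
  exact (card_XS_le_card_YS G k).trans (card_YS_le G k)

lemma key_eq (k : ℕ) :
    (2 * (k+1)) * mCount (⊤ : SimpleGraph V) (k+1) =
    ((Fintype.card V - 2*k) * (Fintype.card V - 2*k) - (Fintype.card V - 2*k))
      * mCount (⊤ : SimpleGraph V) k := by
  rw [← card_XS, ← card_YS_top]
  exact le_antisymm (card_XS_le_card_YS _ k) (card_YS_top_le_card_XS k)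

/-! ### Likelihood-ratio monotonicity -/

lemma mCount_succ_eq_zero {k : ℕ} (h : mCount G k = 0) : mCount G (k+1) = 0 := by
  rw [mCount_eq_fib, Finset.card_eq_zero] at h ⊢
  by_contra h'
  obtain ⟨A, hA⟩ := Finset.nonempty_iff_ne_empty.2 h'
  obtain ⟨hm, hc⟩ := mem_fib.1 hA
  obtain ⟨e, he⟩ := Finset.card_pos.1 (by rw [hc]; omega)
  have : A.erase e ∈ fib G k := mem_fib.2
    ⟨hm.subset (Finset.erase_subset _ _), by rw [Finset.card_erase_of_mem he, hc]; omega⟩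
  rw [h] at this
  exact absurd this (Finset.notMem_empty _)

lemma matchings_subset_top : matchings G ⊆ matchings (⊤ : SimpleGraph V) := by
  intro A hA
  rw [mem_matchings] at hA ⊢
  refine ⟨fun e he => ?_, hA.2⟩
  rw [SimpleGraph.edgeSet_top, Set.mem_compl_iff, Sym2.mem_diagSet]
  exact G.not_isDiag_of_mem_edgeSet (hA.1 he)

lemma mCount_le_top (k : ℕ) : mCount G k ≤ mCount (⊤ : SimpleGraph V) k := by
  classical
  rw [mCount_eq_fib, mCount_eq_fib]
  exact Finset.card_le_card (by
    intro A hA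
    rw [mem_fib] at hA ⊢
    exact ⟨mem_matchings.1 (matchings_subset_top (mem_matchings.2 hA.1)), hA.2⟩)

lemma step_ratio (G : SimpleGraph V) (k : ℕ) :
    mCount G (k+1) * mCount (⊤ : SimpleGraph V) k ≤
    mCount G k * mCount (⊤ : SimpleGraph V) (k+1) := by
  set C := (Fintype.card V - 2*k) * (Fintype.card V - 2*k) - (Fintype.card V - 2*k) with hC
  have h1 : (2*(k+1)) * mCount G (k+1) * mCount (⊤ : SimpleGraph V) k ≤
      C * mCount G k * mCount (⊤ : SimpleGraph V) k :=
    Nat.mul_le_mul_right _ (key_le G k)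
  have h2 : C * mCount G k * mCount (⊤ : SimpleGraph V) k
      = (2*(k+1)) * (mCount G k * mCount (⊤ : SimpleGraph V) (k+1)) := by
    calc C * mCount G k * mCount (⊤ : SimpleGraph V) k
        = mCount G k * (C * mCount (⊤ : SimpleGraph V) k) := by ring
      _ = mCount G k * ((2*(k+1)) * mCount (⊤ : SimpleGraph V) (k+1)) := by rw [← key_eq k]
      _ = (2*(k+1)) * (mCount G k * mCount (⊤ : SimpleGraph V) (k+1)) := by ring
  rw [h2] at h1
  have h3 : (2*(k+1)) * (mCount G (k+1) * mCount (⊤ : SimpleGraph V) k) ≤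
      (2*(k+1)) * (mCount G k * mCount (⊤ : SimpleGraph V) (k+1)) := by
    calc (2*(k+1)) * (mCount G (k+1) * mCount (⊤ : SimpleGraph V) k)
        = (2*(k+1)) * mCount G (k+1) * mCount (⊤ : SimpleGraph V) k := by ring
      _ ≤ _ := h1
  exact Nat.le_of_mul_le_mul_left h3 (by omega)

lemma cross {j k : ℕ} (hjk : j ≤ k) :
    mCount G k * mCount (⊤ : SimpleGraph V) j ≤
    mCount G j * mCount (⊤ : SimpleGraph V) k := by
  induction k, hjk using Nat.le_induction with
  | base => exact le_refl _
  | succ k hjk ih =>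
    by_cases hm : mCount G k = 0
    · rw [mCount_succ_eq_zero hm, zero_mul]
      exact Nat.zero_le _
    by_cases hM : mCount (⊤ : SimpleGraph V) k = 0
    · exact absurd (Nat.eq_zero_of_le_zero (hM ▸ mCount_le_top k)) hm
    have hpos : 0 < mCount G k * mCount (⊤ : SimpleGraph V) k :=
      Nat.mul_pos (Nat.pos_of_ne_zero hm) (Nat.pos_of_ne_zero hM)
    have h3 := Nat.mul_le_mul (step_ratio G k) ih
    have e1 : mCount G (k+1) * mCount (⊤ : SimpleGraph V) k *
          (mCount G k * mCount (⊤ : SimpleGraph V) j)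
        = (mCount G k * mCount (⊤ : SimpleGraph V) k) *
          (mCount G (k+1) * mCount (⊤ : SimpleGraph V) j) := by ring
    have e2 : mCount G k * mCount (⊤ : SimpleGraph V) (k+1) *
          (mCount G j * mCount (⊤ : SimpleGraph V) k)
        = (mCount G k * mCount (⊤ : SimpleGraph V) k) *
          (mCount G j * mCount (⊤ : SimpleGraph V) (k+1)) := by ring
    rw [e1, e2] at h3
    exact Nat.le_of_mul_le_mul_left h3 hpos

/-! ### Small counts -/

lemma mCount_zero (G : SimpleGraph V) : mCount G 0 = 1 := by
  rw [mCount_eq_fib]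
  have : fib G 0 = {∅} := by
    ext A
    rw [mem_fib, Finset.mem_singleton, Finset.card_eq_zero]
    exact ⟨fun h => h.2, fun h => ⟨h ▸ isMatchingSet_empty, h⟩⟩
  rw [this, Finset.card_singleton]

lemma mCount_one (G : SimpleGraph V) : mCount G 1 = (edgeF G).card := by
  classical
  rw [mCount_eq_fib]
  symm
  apply Finset.card_bij (fun e _ => ({e} : Finset (Sym2 V)))
  · intro e he
    rw [mem_fib]
    refine ⟨⟨?_, ?_⟩, Finset.card_singleton e⟩
    · intro f hf
      rw [Finset.coe_singleton, Set.mem_singleton_iff] at hf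
      exact hf ▸ mem_edgeF.1 he
    · rw [Finset.coe_singleton]
      exact Set.pairwise_singleton _ _
  · intro e he f hf hef
    exact Finset.singleton_inj.1 hef
  · intro A hA
    obtain ⟨hm, hc⟩ := mem_fib.1 hA
    obtain ⟨e, rfl⟩ := Finset.card_eq_one.1 hc
    exact ⟨e, mem_edgeF.2 (hm.1 (Finset.mem_singleton_self e)), rfl⟩

lemma mCount_one_lt (hG : G < (⊤ : SimpleGraph V)) :
    mCount G 1 < mCount (⊤ : SimpleGraph V) 1 := by
  rw [mCount_one, mCount_one]
  apply Finset.card_lt_card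
  have hss : G.edgeSet ⊂ (⊤ : SimpleGraph V).edgeSet :=
    SimpleGraph.edgeSet_ssubset_edgeSet.2 hG
  constructor
  · intro e he
    exact mem_edgeF.2 (hss.1 (mem_edgeF.1 he))
  · intro hsub
    obtain ⟨e, heT, heG⟩ := Set.exists_of_ssubset hss
    exact heG (mem_edgeF.1 (hsub (mem_edgeF.2 heT)))

/-! ### Expressing `numM` and `totS` via `mCount` -/

lemma numM_eq_sum (G : SimpleGraph V) :
    numM G = ∑ k ∈ Finset.range (Fintype.card (Sym2 V) + 1), mCount G k := by
  classical
  rw [numM]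
  rw [Finset.card_eq_sum_card_fiberwise
    (f := Finset.card) (t := Finset.range (Fintype.card (Sym2 V) + 1))
    (fun A _ => Finset.mem_range.2 (Nat.lt_succ_of_le (Finset.card_le_univ A)))]
  rfl

lemma totS_eq_sum (G : SimpleGraph V) :
    totS G = ∑ k ∈ Finset.range (Fintype.card (Sym2 V) + 1), k * mCount G k := by
  classical
  rw [totS]
  rw [← Finset.sum_fiberwise_of_maps_to
    (g := Finset.card) (t := Finset.range (Fintype.card (Sym2 V) + 1))
    (fun A _ => Finset.mem_range.2 (Nat.lt_succ_of_le (Finset.card_le_univ A)))]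
  refine Finset.sum_congr rfl fun k hk => ?_
  rw [Finset.sum_congr rfl (fun A hA => (Finset.mem_filter.1 hA).2),
    Finset.sum_const, smul_eq_mul, mul_comm]
  rfl

/-! ### The global inequality -/

lemma main_ineq (G : SimpleGraph V) :
    (totS G : ℤ) * numM (⊤ : SimpleGraph V) ≤ (numM G : ℤ) * totS (⊤ : SimpleGraph V) ∧
    (mCount G 1 < mCount (⊤ : SimpleGraph V) 1 →
      (totS G : ℤ) * numM (⊤ : SimpleGraph V) < (numM G : ℤ) * totS (⊤ : SimpleGraph V)) := by
  classical
  set N := Fintype.card (Sym2 V) + 1 with hN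
  set r := Finset.range N with hr
  set m : ℕ → ℤ := fun k => (mCount G k : ℤ) with hm
  set M : ℕ → ℤ := fun k => (mCount (⊤ : SimpleGraph V) k : ℤ) with hM
  set F : ℤ := ∑ k ∈ r, ∑ j ∈ r, ((j : ℤ) - k) * (m k * M j) with hF
  have hcross : ∀ k j : ℕ, 0 ≤ ((j : ℤ) - k) * (m k * M j - m j * M k) := by
    intro k j
    rcases le_total k j with h | h
    · apply mul_nonneg
      · simp only [sub_nonneg]
        exact_mod_cast h
      · rw [sub_nonneg]
        simp only [hm, hM]
        exact_mod_cast cross (G := G) h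
    · have h1 : ((j : ℤ) - k) ≤ 0 := by simp only [sub_nonpos]; exact_mod_cast h
      have h2 : m k * M j - m j * M k ≤ 0 := by
        rw [sub_nonpos]
        simp only [hm, hM]
        exact_mod_cast cross (G := G) h
      nlinarith [h1, h2]
  have hneg : ∑ k ∈ r, ∑ j ∈ r, ((j : ℤ) - k) * (m j * M k) = -F := by
    rw [eq_neg_iff_add_eq_zero, hF, Finset.sum_comm, ← Finset.sum_add_distrib]
    apply Finset.sum_eq_zero
    intro a _
    rw [← Finset.sum_add_distrib]
    apply Finset.sum_eq_zero
    intro b _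
    ring
  have h2F : 2 * F = ∑ k ∈ r, ∑ j ∈ r, ((j : ℤ) - k) * (m k * M j - m j * M k) := by
    calc 2 * F = F - (-F) := by ring
      _ = (∑ k ∈ r, ∑ j ∈ r, ((j : ℤ) - k) * (m k * M j))
          - ∑ k ∈ r, ∑ j ∈ r, ((j : ℤ) - k) * (m j * M k) := by rw [hF, hneg]
      _ = _ := by
          rw [← Finset.sum_sub_distrib]
          refine Finset.sum_congr rfl fun k _ => ?_
          rw [← Finset.sum_sub_distrib]
          refine Finset.sum_congr rfl fun j _ => by ring
  have hFval : F = (numM G : ℤ) * totS (⊤ : SimpleGraph V)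
      - (totS G : ℤ) * numM (⊤ : SimpleGraph V) := by
    rw [numM_eq_sum, totS_eq_sum, numM_eq_sum, totS_eq_sum]
    push_cast
    rw [Finset.sum_mul_sum, Finset.sum_mul_sum]
    rw [← Finset.sum_sub_distrib]
    rw [hF]
    refine Finset.sum_congr rfl fun k _ => ?_
    rw [← Finset.sum_sub_distrib]
    refine Finset.sum_congr rfl fun j _ => by push_cast [hm, hM]; ring
  have hF0 : 0 ≤ F := by
    have : 0 ≤ 2 * F := by
      rw [h2F]
      exact Finset.sum_nonneg fun k _ => Finset.sum_nonneg fun j _ => hcross k j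
    linarith
  constructor
  · have h := hF0
    rw [hFval] at h
    linarith
  · intro hlt
    have hpos1 : 0 < mCount (⊤ : SimpleGraph V) 1 := Nat.lt_of_le_of_lt (Nat.zero_le _) hlt
    obtain ⟨A, hA⟩ := Finset.card_pos.1 hpos1
    have hA1 : A.card = 1 := (Finset.mem_filter.1 hA).2
    obtain ⟨e, _⟩ := Finset.card_pos.1 (by rw [hA1]; omega : 0 < A.card)
    have hcard : 0 < Fintype.card (Sym2 V) := Fintype.card_pos_iff.2 ⟨e⟩
    have h01 : (0 : ℕ) ∈ r ∧ (1 : ℕ) ∈ r := by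
      constructor <;> · rw [hr, Finset.mem_range, hN]; omega
    have hterm : ((1 : ℤ) - 0) * (m 0 * M 1 - m 1 * M 0)
        ≤ ∑ j ∈ r, ((j : ℤ) - 0) * (m 0 * M j - m j * M 0) :=
      Finset.single_le_sum (fun j _ => hcross 0 j) h01.2
    have houter : ∑ j ∈ r, ((j : ℤ) - 0) * (m 0 * M j - m j * M 0) ≤ 2 * F := by
      rw [h2F]
      exact Finset.single_le_sum (f := fun k => ∑ j ∈ r, ((j : ℤ) - k) * (m k * M j - m j * M k))
        (fun k _ => Finset.sum_nonneg fun j _ => hcross k j) h01.1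
    have hpos : (0 : ℤ) < ((1 : ℤ) - 0) * (m 0 * M 1 - m 1 * M 0) := by
      simp only [hm, hM]
      rw [mCount_zero, mCount_zero]
      push_cast
      have : (mCount G 1 : ℤ) < (mCount (⊤ : SimpleGraph V) 1 : ℤ) := by exact_mod_cast hlt
      linarith
    have hFpos : 0 < F := by linarith
    rw [hFval] at hFpos
    linarith

theorem avm_le_complete (n : ℕ) (G : SimpleGraph (Fin n)) :
    avm G ≤ avm (⊤ : SimpleGraph (Fin n)) ∧
      (avm G = avm (⊤ : SimpleGraph (Fin n)) ↔ G = ⊤) := by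
  have hG0 : (0 : ℚ) < (numM G : ℚ) := by exact_mod_cast numM_pos (G := G)
  have hT0 : (0 : ℚ) < (numM (⊤ : SimpleGraph (Fin n)) : ℚ) := by
    exact_mod_cast numM_pos (G := (⊤ : SimpleGraph (Fin n)))
  by_cases hG : G = ⊤
  · subst hG
    exact ⟨le_refl _, ⟨fun _ => rfl, fun _ => rfl⟩⟩
  · have hlt : G < ⊤ := Ne.lt_top hG
    have hstrict := (main_ineq G).2 (mCount_one_lt hlt)
    have hQ : (totS G : ℚ) * numM (⊤ : SimpleGraph (Fin n))
        < (numM G : ℚ) * totS (⊤ : SimpleGraph (Fin n)) := by exact_mod_cast hstrict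
    have havm : avm G < avm (⊤ : SimpleGraph (Fin n)) := by
      rw [avm, avm, div_lt_div_iff₀ hG0 hT0]
      linarith [hQ]
    exact ⟨havm.le, ⟨fun h => absurd h havm.ne, fun h => absurd h hG⟩⟩

end AvgMatching
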